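/- Let K be an incomplete context and L a closed set of implications satisfiable in K. Then for every object g of K, L(g^□) ⊆ g^◇, where L(·) is the closure operator induced by L. -/
import Mathlib


/-- The three possible values of an incomplete context:
`yes` (×), `no` (∘) and `unk` (?). -/
inductive IncVal : Type
  | yes : IncVal
  | no : IncVal
  | unk : IncVal
deriving DecidableEq

/-- The models of a set of attribute implications over `M`. -/
def ModSet {M : Type*} (L : Set (Set M × Set M)) : Set (Set M) :=
  {T | ∀ p ∈ L, p.1 ⊆ T → p.2 ⊆ T}

/-- The closure operator induced by a set of implications `L`:
the smallest model of `L` containing `X`. -/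
def implClosure {M : Type*} (L : Set (Set M × Set M)) (X : Set M) : Set M :=
  {m | ∀ T ∈ ModSet L, X ⊆ T → m ∈ T}

/-- if `L` is a closed set of implications satisfiable in an
incomplete context `K`, then `L(g^□) ⊆ g^◇` for every object `g`. -/
theorem stmt9 {G M : Type*} (I : G → M → IncVal) (L : Set (Set M × Set M))
    (hclosed : ∀ A B : Set M, (∀ T ∈ ModSet L, A ⊆ T → B ⊆ T) → (A, B) ∈ L)
    (hsat : ∀ p ∈ L, ∀ g : G,
      p.1 ⊆ {m | I g m = IncVal.yes} → p.2 ⊆ {m | I g m ≠ IncVal.no}) :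
    ∀ g : G, implClosure L {m | I g m = IncVal.yes} ⊆ {m | I g m ≠ IncVal.no} := by
  intro g m hm
  have hL : ({m | I g m = IncVal.yes}, implClosure L {m | I g m = IncVal.yes}) ∈ L :=
    hclosed _ _ (fun T hT hX n hn => hn T hT hX)
  exact hsat _ hL g (fun _ h => h) hm
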